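/- arXiv:0905.3584 — 4 statements merged into one kernel-verified Lean document; each statement's English description precedes it below -/
import Mathlib

section
/- For the relative neighborhood graph of n points drawn independently and uniformly at random from [0,1]^2, for every constant c > 1, lim_{n→∞} Pr{ maximal degree > c·log n / log log n } = 0; in particular the maximal degree is O(log n / log log n) in probability. -/
/-! In general position (from each point all other points are at pairwise distinct distances,
which holds almost surely for i.i.d. uniform points) two neighbours of a point in the relative
neighbourhood graph are seen from it under an angle of at least `π / 3`. Their directions are
therefore `1`-separated unit vectors, and a volume packing argument bounds their number, hence
every degree, by the constant `5 ^ 2`. Since `c log n / log log n → ∞`, the probability in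
question is `0` for all large `n`. -/

open MeasureTheory Filter

noncomputable section

/-- The Euclidean plane. -/
abbrev E2 := EuclideanSpace ℝ (Fin 2)

/-- The unit square `[0,1]^2`. -/
def unitSquare : Set E2 := {p | p 0 ∈ Set.Icc (0:ℝ) 1 ∧ p 1 ∈ Set.Icc (0:ℝ) 1}

/-- Relative neighborhood graph adjacency: `i` and `j` are adjacent iff no third point
`k` satisfies `max(|X i − X k|, |X j − X k|) < |X i − X j|`, i.e. the lune of `X i` and
`X j` contains no point of the set. -/
def rngAdj {n : ℕ} (X : Fin n → E2) (i j : Fin n) : Prop :=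
  i ≠ j ∧ ∀ k : Fin n, k ≠ i → k ≠ j →
    dist (X i) (X j) ≤ max (dist (X i) (X k)) (dist (X j) (X k))

/-- Degree of vertex `i` in the relative neighborhood graph of the points `X`. -/
def rngDeg {n : ℕ} (X : Fin n → E2) (i : Fin n) : ℕ :=
  Nat.card {j : Fin n // rngAdj X i j}

/-- Maximal degree of the relative neighborhood graph of the points `X`. -/
def rngMaxDeg {n : ℕ} (X : Fin n → E2) : ℕ :=
  Finset.univ.sup (rngDeg X)

/-- The uniform distribution on the unit square (which has area 1). -/
def unifSquare : Measure E2 := volume.restrict unitSquare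

/-- `n` points drawn independently and uniformly from the unit square. -/
def Pn (n : ℕ) : Measure (Fin n → E2) := Measure.pi fun _ => unifSquare

open Metric Function

/-- The case `k = i` says that no two points coincide. -/
def DistinctDistances {ι α : Type*} [PseudoMetricSpace α] (X : ι → α) : Prop :=
  ∀ i j k, j ≠ i → j ≠ k → dist (X i) (X j) ≠ dist (X i) (X k)

/-- The angle between `v` and `w` is at least `π / 3`. -/
theorem one_le_norm_normalize_sub_normalize {V : Type*} [NormedAddCommGroup V]
    [InnerProductSpace ℝ V] {v w : V} (hv : v ≠ 0) (hvw : ‖v‖ ≤ ‖w‖) (hw : ‖w‖ ≤ ‖v - w‖) :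
    1 ≤ ‖‖v‖⁻¹ • v - ‖w‖⁻¹ • w‖ := by
  have ha : 0 < ‖v‖ := norm_pos_iff.2 hv
  have hb : 0 < ‖w‖ := ha.trans_le hvw
  have hinner : 2 * inner ℝ v w ≤ ‖v‖ * ‖w‖ := by nlinarith [norm_sub_sq_real v w]
  have hsq : ‖‖v‖⁻¹ • v - ‖w‖⁻¹ • w‖ ^ 2 = 2 - 2 * inner ℝ v w / (‖v‖ * ‖w‖) := by
    rw [norm_sub_sq_real, norm_smul, norm_smul, real_inner_smul_left, real_inner_smul_right]
    simp only [norm_inv, norm_norm]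
    field_simp
    ring
  have : 2 * inner ℝ v w / (‖v‖ * ‖w‖) ≤ 1 := (div_le_one (by positivity)).2 hinner
  nlinarith [norm_nonneg (‖v‖⁻¹ • v - ‖w‖⁻¹ • w)]

theorem tendsto_div_log_atTop : Tendsto (fun x => x / Real.log x) atTop atTop := by
  have hlim : Tendsto (fun x => Real.log x / x) atTop (nhdsWithin 0 (Set.Ioi 0)) := by
    refine tendsto_nhdsWithin_iff.2 ⟨?_, ?_⟩
    · simpa using Real.tendsto_pow_log_div_mul_add_atTop 1 0 1 one_ne_zero
    · filter_upwards [eventually_gt_atTop 1] with x hx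
      exact div_pos (Real.log_pos hx) (by linarith)
  exact hlim.inv_tendsto_nhdsGT_zero.congr fun x => inv_div _ _

theorem tendsto_mul_log_div_log_log_atTop {c : ℝ} (hc : 0 < c) :
    Tendsto (fun n : ℕ => c * Real.log n / Real.log (Real.log n)) atTop atTop := by
  simpa only [mul_div_assoc, comp_apply] using (tendsto_div_log_atTop.comp
    (Real.tendsto_log_atTop.comp tendsto_natCast_atTop_atTop)).const_mul_atTop hc

section RelativeNeighborhoodGraph

variable {n : ℕ} {X : Fin n → E2}

/-- The farther neighbour `X k` is at least as close to `X j` as to `X i`, since otherwise `X j`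
would lie in the lune of `X i` and `X k`. -/
theorem one_le_norm_sub_of_rngAdj (hX : DistinctDistances X) {i j k : Fin n}
    (hj : rngAdj X i j) (hk : rngAdj X i k) (hjk : j ≠ k) :
    1 ≤ ‖‖X j - X i‖⁻¹ • (X j - X i) - ‖X k - X i‖⁻¹ • (X k - X i)‖ := by
  wlog hlt : dist (X i) (X j) < dist (X i) (X k) generalizing j k
  · rw [norm_sub_rev]
    exact this hk hj hjk.symm <|
      (not_lt.1 hlt).lt_of_ne (hX i k j (Ne.symm hk.1) hjk.symm)
  have hfar : dist (X i) (X k) ≤ dist (X k) (X j) :=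
    (le_max_iff.1 (hk.2 j (Ne.symm hj.1) hjk)).resolve_left hlt.not_ge
  have hne : X j - X i ≠ 0 := by
    refine sub_ne_zero.2 fun h => hX i j i (Ne.symm hj.1) (Ne.symm hj.1) ?_
    rw [h]
  refine one_le_norm_normalize_sub_normalize hne ?_ ?_
  · rw [← dist_eq_norm, ← dist_eq_norm, dist_comm, dist_comm (X k)]
    exact hlt.le
  · rwa [sub_sub_sub_cancel_right, ← dist_eq_norm, ← dist_eq_norm, dist_comm (X k),
      dist_comm (X j)]

theorem rngDeg_le_of_distinctDistances (hX : DistinctDistances X) (i : Fin n) :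
    rngDeg X i ≤ 25 := by
  classical
  set dir : Fin n → E2 := fun j => ‖X j - X i‖⁻¹ • (X j - X i)
  set N := Finset.univ.filter (rngAdj X i)
  have hsep : ∀ j ∈ N, ∀ k ∈ N, j ≠ k → 1 ≤ ‖dir j - dir k‖ := by
    intro j hj k hk hjk
    exact one_le_norm_sub_of_rngAdj hX (Finset.mem_filter.1 hj).2 (Finset.mem_filter.1 hk).2 hjk
  have hinj : Set.InjOn dir N := fun j hj k hk h => by
    by_contra hjk
    have := hsep j hj k hk hjk
    norm_num [h] at this
  have hcard : rngDeg X i = N.card := by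
    rw [rngDeg, Nat.card_eq_fintype_card, Fintype.card_subtype]
  rw [hcard, ← Finset.card_image_of_injOn hinj]
  convert Besicovitch.card_le_of_separated (N.image dir) ?_ ?_
  · rw [finrank_euclideanSpace_fin]; norm_num
  · simp only [Finset.mem_image, forall_exists_index, and_imp, forall_apply_eq_imp_iff₂]
    intro j _
    rw [norm_smul, norm_inv, norm_norm]
    exact (inv_mul_le_one_of_le₀ le_rfl (norm_nonneg _)).trans one_le_two
  · simp only [Finset.mem_image, forall_exists_index, and_imp, forall_apply_eq_imp_iff₂]
    intro j hj k hk hjk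
    exact hsep j hj k hk (ne_of_apply_ne dir hjk)

theorem rngMaxDeg_le_of_distinctDistances (hX : DistinctDistances X) : rngMaxDeg X ≤ 25 :=
  Finset.sup_le fun i _ => rngDeg_le_of_distinctDistances hX i

end RelativeNeighborhoodGraph

theorem MeasureTheory.Measure.pi_eq_zero_of_forall_update {δ : Type*} [Fintype δ] [DecidableEq δ]
    {Y : δ → Type*} [∀ i, MeasurableSpace (Y i)] (μ : ∀ i, Measure (Y i))
    [∀ i, SigmaFinite (μ i)] {s : Set (∀ i, Y i)} (hs : MeasurableSet s) (k : δ)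
    (h : ∀ x, μ k {z | update x k z ∈ s} = 0) : Measure.pi μ s = 0 := by
  rcases isEmpty_or_nonempty (∀ i, Y i) with hY | ⟨⟨x⟩⟩
  · simp [Set.eq_empty_of_isEmpty s]
  have hsection : ∫⋯∫⁻_{k}, s.indicator 1 ∂μ = 0 := by
    ext y
    rw [lmarginal_singleton, Pi.zero_apply, ← h y]
    exact lintegral_indicator_one (measurable_update y hs)
  rw [← lintegral_indicator_one hs, lintegral_eq_lmarginal_univ x, ← Finset.insert_erase
    (Finset.mem_univ k), Finset.insert_eq, lmarginal_union' μ _ (measurable_one.indicator hs)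
    (Finset.disjoint_singleton_left.2 (Finset.notMem_erase k _)), hsection]
  simp [lmarginal]

theorem pi_not_distinctDistances_eq_zero {ι α : Type*} [Fintype ι] [DecidableEq ι]
    [MetricSpace α] [MeasurableSpace α] [BorelSpace α] [SecondCountableTopology α]
    (μ : Measure α) [SigmaFinite μ] (hμ : ∀ x r, μ (sphere x r) = 0) :
    Measure.pi (fun _ : ι => μ) {X | ¬ DistinctDistances X} = 0 := by
  refine measure_mono_null (t := ⋃ (i) (j) (k) (_ : j ≠ i) (_ : j ≠ k),
    {X : ι → α | dist (X i) (X j) = dist (X i) (X k)}) ?_ ?_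
  · intro X hX
    obtain ⟨i, j, k, hji, hjk, h⟩ :
        ∃ i j k, j ≠ i ∧ j ≠ k ∧ dist (X i) (X j) = dist (X i) (X k) := by
      simpa [DistinctDistances] using hX
    simp only [Set.mem_iUnion]
    exact ⟨i, j, k, hji, hjk, h⟩
  simp only [measure_iUnion_null_iff]
  intro i j k hji hjk
  refine Measure.pi_eq_zero_of_forall_update _ (measurableSet_eq_fun
    ((measurable_pi_apply i).dist (measurable_pi_apply j))
    ((measurable_pi_apply i).dist (measurable_pi_apply k))) j fun X => ?_
  convert hμ (X i) (dist (X i) (X k)) using 2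
  ext z
  simp [update_of_ne hji.symm, update_of_ne hjk.symm, dist_comm z]

instance : SigmaFinite unifSquare := by
  unfold unifSquare; infer_instance

theorem unifSquare_sphere_eq_zero (x : E2) (r : ℝ) : unifSquare (sphere x r) = 0 :=
  nonpos_iff_eq_zero.1 <|
    (Measure.restrict_apply_le _ _).trans_eq (Measure.addHaar_sphere _ x r)

theorem Pn_not_distinctDistances_eq_zero (n : ℕ) : Pn n {X | ¬ DistinctDistances X} = 0 :=
  pi_not_distinctDistances_eq_zero unifSquare unifSquare_sphere_eq_zero

/-- For every `c > 1`, the probability that the maximal degree of the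
relative neighborhood graph of `n` i.i.d. uniform points in `[0,1]^2` exceeds
`c log n / log log n` tends to `0`; in particular the maximal degree is
`O(log n / log log n)` in probability. -/
theorem rng_maxDegree_upper_bound (c : ℝ) (hc : 1 < c) :
    Tendsto
      (fun n : ℕ => Pn n {X : Fin n → E2 |
        c * Real.log n / Real.log (Real.log n) < (rngMaxDeg X : ℝ)})
      atTop (nhds 0) := by
  have hthreshold : ∀ᶠ n : ℕ in atTop, (25 : ℝ) ≤ c * Real.log n / Real.log (Real.log n) :=
    (tendsto_mul_log_div_log_log_atTop (zero_lt_one.trans hc)).eventually_ge_atTop 25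
  refine tendsto_const_nhds.congr' ?_
  filter_upwards [hthreshold] with n hn
  refine (measure_mono_null (fun X hX hgood => ?_) (Pn_not_distinctDistances_eq_zero n)).symm
  have : (rngMaxDeg X : ℝ) ≤ 25 := by exact_mod_cast rngMaxDeg_le_of_distinctDistances hgood
  exact (hX.trans_le this).not_ge hn
end
end

section
/- For the Gabriel graph of n points drawn independently and uniformly at random from [0,1]^2, lim_{n→∞} Pr{ some edge of the Gabriel graph has Euclidean length greater than 3·√(log n / n) } = 0. -/
open MeasureTheory Filter

noncomputable section

/-- Gabriel adjacency: `i` and `j` are adjacent iff no third point lies in the open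
disk whose diameter is the segment from `X i` to `X j`. -/
def gabrielAdj {n : ℕ} (X : Fin n → E2) (i j : Fin n) : Prop :=
  i ≠ j ∧ ∀ k : Fin n, k ≠ i → k ≠ j →
    dist (X i) (X j) / 2 ≤ dist (X k) (midpoint ℝ (X i) (X j))

/-- Degree of vertex `i` in the Gabriel graph of the points `X`. -/
def gabrielDeg {n : ℕ} (X : Fin n → E2) (i : Fin n) : ℕ :=
  Nat.card {j : Fin n // gabrielAdj X i j}

/-- Maximal degree of the Gabriel graph of the points `X`. -/
def gabrielMaxDeg {n : ℕ} (X : Fin n → E2) : ℕ :=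
  Finset.univ.sup (gabrielDeg X)

/-!
Cut the unit square into an `N × N` grid with `N ≈ (24/25)√(n / log n)`, so that a cell has
diameter `√2 / N ≤ r / 2` for `r = 3√(log n / n)`. If `uv` is a Gabriel edge longer than `r`,
the cell containing its midpoint lies inside the open disk with diameter `uv`, which holds no
sample point; so some cell is empty. By the union bound this has probability at most
`N² (1 - 1/N²)ⁿ ≤ N² exp (-n / N²) ≤ n ^ (-1/25)`.
-/

open Real

lemma gabrielAdj.dist_div_two_le {n : ℕ} {X : Fin n → E2} {i j : Fin n} (h : gabrielAdj X i j)
    (k : Fin n) : dist (X i) (X j) / 2 ≤ dist (X k) (midpoint ℝ (X i) (X j)) := by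
  by_cases hki : k = i
  · subst hki
    simp [dist_left_midpoint, div_eq_inv_mul]
  by_cases hkj : k = j
  · subst hkj
    simp [dist_right_midpoint, div_eq_inv_mul]
  exact h.2 k hki hkj

lemma unitSquare_eq_preimage : unitSquare =
    (MeasurableEquiv.toLp 2 (Fin 2 → ℝ)).symm ⁻¹' Set.univ.pi fun _ => Set.Icc 0 1 := by
  ext p
  simp [unitSquare, Fin.forall_fin_two, -Set.pi_univ_Icc]

lemma measurableSet_unitSquare : MeasurableSet unitSquare := by
  rw [unitSquare_eq_preimage]
  exact MeasurableEquiv.measurable _ (.univ_pi fun _ => measurableSet_Icc)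

lemma volume_unitSquare : volume unitSquare = 1 := by
  rw [unitSquare_eq_preimage,
    (EuclideanSpace.volume_preserving_symm_measurableEquiv_toLp (Fin 2)).measure_preimage
      (MeasurableSet.univ_pi fun _ => measurableSet_Icc).nullMeasurableSet,
    volume_pi_pi]
  simp

lemma midpoint_mem_unitSquare {u v : E2} (hu : u ∈ unitSquare) (hv : v ∈ unitSquare) :
    midpoint ℝ u v ∈ unitSquare := by
  obtain ⟨⟨hu₀, hu₀'⟩, hu₁, hu₁'⟩ := hu
  obtain ⟨⟨hv₀, hv₀'⟩, hv₁, hv₁'⟩ := hv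
  simp only [unitSquare, midpoint_eq_smul_add, invOf_eq_inv, Set.mem_ofPred_eq, Set.mem_Icc,
    PiLp.smul_apply, PiLp.add_apply, smul_eq_mul]
  refine ⟨⟨?_, ?_⟩, ?_, ?_⟩ <;> linarith

def gridCell (N : ℕ) (a : Fin 2 → Fin N) : Set E2 :=
  {p | ∀ k, p k ∈ Set.Icc ((a k : ℝ) / N) ((a k + 1) / N)}

lemma gridCell_eq_preimage (N : ℕ) (a : Fin 2 → Fin N) : gridCell N a =
    (MeasurableEquiv.toLp 2 (Fin 2 → ℝ)).symm ⁻¹'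
      Set.univ.pi fun k => Set.Icc ((a k : ℝ) / N) ((a k + 1) / N) := by
  ext p
  simp [gridCell, -Set.pi_univ_Icc]

lemma measurableSet_gridCell (N : ℕ) (a : Fin 2 → Fin N) : MeasurableSet (gridCell N a) := by
  rw [gridCell_eq_preimage]
  exact MeasurableEquiv.measurable _ (.univ_pi fun _ => measurableSet_Icc)

lemma volume_gridCell (N : ℕ) (a : Fin 2 → Fin N) :
    volume (gridCell N a) = ENNReal.ofReal (1 / N ^ 2) := by
  rw [gridCell_eq_preimage,
    (EuclideanSpace.volume_preserving_symm_measurableEquiv_toLp (Fin 2)).measure_preimage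
      (MeasurableSet.univ_pi fun _ => measurableSet_Icc).nullMeasurableSet,
    volume_pi_pi]
  simp only [Real.volume_Icc, add_div, add_sub_cancel_left, Finset.prod_const, Finset.card_univ,
    Fintype.card_fin]
  rw [← ENNReal.ofReal_pow (by positivity), one_div_pow]

lemma gridCell_subset_unitSquare {N : ℕ} (a : Fin 2 → Fin N) : gridCell N a ⊆ unitSquare := by
  have hN : (0 : ℝ) < N := by exact_mod_cast (a 0).pos
  have hcell (k : Fin 2) : Set.Icc ((a k : ℝ) / N) ((a k + 1) / N) ⊆ Set.Icc 0 1 := by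
    refine Set.Icc_subset_Icc (by positivity) ((div_le_one hN).2 ?_)
    exact_mod_cast (a k).isLt
  exact fun p hp => ⟨hcell 0 (hp 0), hcell 1 (hp 1)⟩

lemma exists_fin_mem_Icc_div {N : ℕ} (hN : 0 < N) {x : ℝ} (hx : x ∈ Set.Icc (0 : ℝ) 1) :
    ∃ i : Fin N, x ∈ Set.Icc ((i : ℝ) / N) ((i + 1) / N) := by
  have hN' : (0 : ℝ) < N := by exact_mod_cast hN
  refine ⟨⟨min ⌊x * N⌋₊ (N - 1), by omega⟩, ?_, ?_⟩
  · rw [div_le_iff₀ hN']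
    calc ((min ⌊x * N⌋₊ (N - 1) : ℕ) : ℝ) ≤ ⌊x * N⌋₊ := by exact_mod_cast min_le_left _ _
      _ ≤ x * N := Nat.floor_le (mul_nonneg hx.1 hN'.le)
  · rw [le_div_iff₀ hN']
    rcases min_choice ⌊x * N⌋₊ (N - 1) with h | h <;> simp only [h]
    · exact (Nat.lt_floor_add_one _).le
    · rw [Nat.cast_sub hN, Nat.cast_one, sub_add_cancel]
      nlinarith [hx.2]

lemma exists_mem_gridCell {N : ℕ} (hN : 0 < N) {p : E2} (hp : p ∈ unitSquare) :
    ∃ a, p ∈ gridCell N a := by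
  have hp' : ∀ k, p k ∈ Set.Icc (0 : ℝ) 1 := Fin.forall_fin_two.2 hp
  choose a ha using fun k => exists_fin_mem_Icc_div hN (hp' k)
  exact ⟨a, ha⟩

lemma dist_le_of_mem_gridCell {N : ℕ} {a : Fin 2 → Fin N} {p q : E2} (hp : p ∈ gridCell N a)
    (hq : q ∈ gridCell N a) : dist p q ≤ √2 / N := by
  have hcoord (k : Fin 2) : dist (p k) (q k) ^ 2 ≤ (1 / N) ^ 2 := by
    refine pow_le_pow_left₀ dist_nonneg ?_ 2
    exact (Real.dist_le_of_mem_Icc (hp k) (hq k)).trans_eq (by ring)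
  rw [EuclideanSpace.dist_eq, Fin.sum_univ_two]
  calc √(dist (p 0) (q 0) ^ 2 + dist (p 1) (q 1) ^ 2) ≤ √(2 * (1 / N) ^ 2) :=
        Real.sqrt_le_sqrt (by linarith [hcoord 0, hcoord 1])
    _ = √2 / N := by rw [Real.sqrt_mul zero_le_two, Real.sqrt_sq (by positivity), mul_one_div]

lemma exists_forall_not_mem_gridCell {n N : ℕ} (hN : 0 < N) {X : Fin n → E2}
    (hX : ∀ k, X k ∈ unitSquare) {i j : Fin n} (hij : gabrielAdj X i j)
    (hlong : √2 / N < dist (X i) (X j) / 2) : ∃ a, ∀ k, X k ∉ gridCell N a := by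
  obtain ⟨a, ha⟩ := exists_mem_gridCell hN (midpoint_mem_unitSquare (hX i) (hX j))
  exact ⟨a, fun k hk => by linarith [dist_le_of_mem_gridCell hk ha, hij.dist_div_two_le k]⟩

instance : IsProbabilityMeasure unifSquare :=
  ⟨by rw [unifSquare, Measure.restrict_apply_univ, volume_unitSquare]⟩

lemma ae_Pn_mem_unitSquare (n : ℕ) : ∀ᵐ X ∂Pn n, ∀ k, X k ∈ unitSquare :=
  ae_all_iff.2 fun _ =>
    Measure.tendsto_eval_ae_ae.eventually (ae_restrict_mem measurableSet_unitSquare)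

lemma Pn_forall_not_mem (n : ℕ) (s : Set E2) :
    Pn n {X | ∀ k, X k ∉ s} = unifSquare sᶜ ^ n := by
  have hpi : {X : Fin n → E2 | ∀ k, X k ∉ s} = Set.univ.pi fun _ => sᶜ := by
    ext
    simp
  rw [hpi, Pn, Measure.pi_pi, Finset.prod_const, Finset.card_univ, Fintype.card_fin]

lemma one_div_natCast_sq_le_one (N : ℕ) : 1 / (N : ℝ) ^ 2 ≤ 1 := by
  rw [one_div, ← Nat.cast_pow]
  exact Nat.cast_inv_le_one _

lemma unifSquare_compl_gridCell {N : ℕ} (a : Fin 2 → Fin N) :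
    unifSquare (gridCell N a)ᶜ = ENNReal.ofReal (1 - 1 / N ^ 2) := by
  rw [prob_compl_eq_one_sub (measurableSet_gridCell N a), unifSquare,
    Measure.restrict_apply (measurableSet_gridCell N a),
    Set.inter_eq_self_of_subset_left (gridCell_subset_unitSquare a), volume_gridCell,
    ENNReal.ofReal_sub _ (by positivity), ENNReal.ofReal_one]

lemma Pn_exists_forall_not_mem_gridCell_le (n N : ℕ) :
    Pn n {X | ∃ a : Fin 2 → Fin N, ∀ k, X k ∉ gridCell N a}
      ≤ ENNReal.ofReal (N ^ 2 * (1 - 1 / N ^ 2) ^ n) := by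
  have hnonneg : (0 : ℝ) ≤ 1 - 1 / N ^ 2 := sub_nonneg.2 (one_div_natCast_sq_le_one N)
  have hunion : {X : Fin n → E2 | ∃ a : Fin 2 → Fin N, ∀ k, X k ∉ gridCell N a} =
      ⋃ a, {X | ∀ k, X k ∉ gridCell N a} := by
    ext
    simp
  calc _ ≤ ∑ a : Fin 2 → Fin N, Pn n {X | ∀ k, X k ∉ gridCell N a} :=
        hunion ▸ measure_iUnion_fintype_le _ _
    _ = ∑ _a : Fin 2 → Fin N, ENNReal.ofReal ((1 - 1 / N ^ 2) ^ n) := by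
        simp only [Pn_forall_not_mem, unifSquare_compl_gridCell, ENNReal.ofReal_pow hnonneg]
    _ = ENNReal.ofReal (N ^ 2 * (1 - 1 / N ^ 2) ^ n) := by
        rw [Finset.sum_const, Finset.card_univ, Fintype.card_fun, Fintype.card_fin,
          Fintype.card_fin, nsmul_eq_mul, ENNReal.ofReal_mul (by positivity)]
        norm_cast

lemma Pn_long_gabriel_edge_le {n N : ℕ} {r : ℝ} (hN : 0 < N) (hr : √2 / N ≤ r / 2) :
    Pn n {X | ∃ i j, gabrielAdj X i j ∧ r < dist (X i) (X j)}
      ≤ ENNReal.ofReal (N ^ 2 * (1 - 1 / N ^ 2) ^ n) := by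
  refine (measure_mono_ae ?_).trans (Pn_exists_forall_not_mem_gridCell_le n N)
  filter_upwards [ae_Pn_mem_unitSquare n] with X hX ⟨i, j, hij, hlong⟩
  exact exists_forall_not_mem_gridCell hN hX hij (by linarith)

/-- Any constant in `(2√2/3, 1)` works in place of `24/25`: above `2√2/3` the cell diameter
`√2 / N` is at most half of `3√(log n / n)`, below `1` the ratio `n / N²` eventually exceeds
`log n` by a constant factor. -/
def gridSize (n : ℕ) : ℕ := ⌈(24 / 25 : ℝ) * √(n / log n)⌉₊

section gridSize

variable {n : ℕ}

lemma gridSize_pos (hn : 2 ≤ n) : 0 < gridSize n := by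
  have hL : 0 < log n := log_pos (by exact_mod_cast hn)
  exact Nat.ceil_pos.2 (mul_pos (by norm_num) (sqrt_pos.2 (by positivity)))

lemma sqrt_two_div_gridSize_le (hn : 2 ≤ n) : √2 / gridSize n ≤ 3 * √(log n / n) / 2 := by
  have hL : 0 < log n := log_pos (by exact_mod_cast hn)
  have hn' : (0 : ℝ) < n := by positivity
  have hprod : √(n / log n) * √(log n / n) = 1 := by
    rw [← sqrt_mul (by positivity), show (n / log n * (log n / n) : ℝ) = 1 by field_simp, sqrt_one]
  have hsqrt2 : √2 ≤ 36 / 25 := sqrt_le_iff.2 ⟨by norm_num, by norm_num⟩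
  have hN : (24 / 25 : ℝ) * √(n / log n) ≤ gridSize n := Nat.le_ceil _
  rw [div_le_iff₀ (by exact_mod_cast gridSize_pos hn)]
  calc √2 ≤ 3 / 2 * √(log n / n) * ((24 / 25) * √(n / log n)) := by
        linear_combination hsqrt2 - 36 / 25 * hprod
    _ ≤ 3 * √(log n / n) / 2 * gridSize n := by
        rw [mul_div_right_comm]
        gcongr

lemma gridSize_sq_mul_log_le (hn : 2 ≤ n) (hlog : 2500 * log n ≤ n) :
    (gridSize n : ℝ) ^ 2 * log n ≤ 25 / 26 * (n : ℝ) := by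
  have hL : 0 < log n := log_pos (by exact_mod_cast hn)
  set S := √(n / log n) with hS
  have hS2 : S ^ 2 * log n = n := by
    rw [sq_sqrt (by positivity), div_mul_cancel₀ _ hL.ne']
  have hS50 : 50 ≤ S := le_sqrt_of_sq_le (by rw [le_div_iff₀ hL]; linarith)
  have hN : (gridSize n : ℝ) ≤ 49 / 50 * S := by
    have := Nat.ceil_lt_add_one (show (0 : ℝ) ≤ 24 / 25 * S by positivity)
    unfold gridSize
    linarith
  calc (gridSize n : ℝ) ^ 2 * log n ≤ (49 / 50 * S) ^ 2 * log n := by gcongr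
    _ ≤ 25 / 26 * (n : ℝ) := by nlinarith

end gridSize

lemma eventually_mul_log_le {c : ℝ} (hc : 0 < c) : ∀ᶠ n : ℕ in atTop, c * log n ≤ n := by
  have hbound := isLittleO_log_id_atTop.bound (inv_pos.2 hc)
  filter_upwards [tendsto_natCast_atTop_atTop.eventually hbound] with n hn
  simp only [norm_eq_abs, id, Nat.abs_cast] at hn
  have := mul_le_mul_of_nonneg_left ((le_abs_self _).trans hn) hc.le
  rwa [mul_inv_cancel_left₀ hc.ne'] at this

lemma sq_mul_one_sub_one_div_sq_pow_le {N n : ℕ} (hN : 0 < N) (hn : 3 ≤ n)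
    (h : (N : ℝ) ^ 2 * log n ≤ 25 / 26 * n) :
    (N : ℝ) ^ 2 * (1 - 1 / N ^ 2) ^ n ≤ (n : ℝ) ^ (-(1 / 25 : ℝ)) := by
  have hn' : (0 : ℝ) < n := by positivity
  have hL : 1 ≤ log n := by
    rw [le_log_iff_exp_le hn']
    exact (exp_one_lt_d9.trans (by norm_num : (2.7182818286 : ℝ) < 3)).le.trans
      (by exact_mod_cast hn)
  set m : ℝ := (N : ℝ) ^ 2 with hm
  have hm1 : 1 ≤ m := one_le_pow₀ (by exact_mod_cast hN)
  have hpow : (1 - 1 / m) ^ n ≤ exp (-(26 / 25 * log n)) := by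
    have h1 := one_sub_div_pow_le_exp_neg (n := n) (t := n / m) (div_le_self hn'.le hm1)
    rw [div_div_cancel_left' hn'.ne', ← one_div] at h1
    refine h1.trans (exp_le_exp.2 (neg_le_neg ?_))
    rw [le_div_iff₀ (by positivity)]
    linarith
  calc m * (1 - 1 / m) ^ n ≤ n * exp (-(26 / 25 * log n)) :=
        mul_le_mul (by nlinarith) hpow (pow_nonneg (by linarith [one_div_le_one_div_of_le one_pos hm1]) _) hn'.le
    _ = (n : ℝ) ^ (-(1 / 25 : ℝ)) := by
        rw [rpow_def_of_pos hn']
        nth_rewrite 1 [← exp_log hn']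
        rw [← exp_add]
        ring_nf

/-- The probability that some edge of the Gabriel graph of `n` i.i.d.
uniform points in `[0,1]^2` has Euclidean length greater than `3√(log n / n)` tends
to `0`. -/
theorem gabriel_max_edge_length :
    Tendsto
      (fun n : ℕ => Pn n {X : Fin n → E2 |
        ∃ i j : Fin n, gabrielAdj X i j ∧
          3 * Real.sqrt (Real.log n / n) < dist (X i) (X j)})
      atTop (nhds 0) := by
  have hbound : ∀ᶠ n : ℕ in atTop, Pn n {X : Fin n → E2 | ∃ i j : Fin n, gabrielAdj X i j ∧
      3 * √(log n / n) < dist (X i) (X j)} ≤ ENNReal.ofReal ((n : ℝ) ^ (-(1 / 25 : ℝ))) := by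
    filter_upwards [eventually_ge_atTop 3, eventually_mul_log_le (c := 2500) (by norm_num)]
      with n hn hlog
    have hN := gridSize_pos (n := n) (by omega)
    refine (Pn_long_gabriel_edge_le hN (sqrt_two_div_gridSize_le (by omega))).trans
      (ENNReal.ofReal_le_ofReal ?_)
    exact sq_mul_one_sub_one_div_sq_pow_le hN hn (gridSize_sq_mul_log_le (by omega) hlog)
  have hlim : Tendsto (fun n : ℕ => ENNReal.ofReal ((n : ℝ) ^ (-(1 / 25 : ℝ)))) atTop (nhds 0) := by
    simpa using ENNReal.tendsto_ofReal
      ((tendsto_rpow_neg_atTop (by norm_num)).comp tendsto_natCast_atTop_atTop)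
  exact tendsto_of_tendsto_of_tendsto_of_le_of_le' tendsto_const_nhds hlim
    (.of_forall fun _ => zero_le) hbound
end
end

section
/- Let X_1,…,X_m be drawn independently and uniformly at random from an axis-parallel rectangle [a,b]×[c,d] of positive area, and let M be the number of maximal points among X_1,…,X_m. Then log m ≤ E[M] ≤ log m + 1 (natural logarithm). The same bounds hold when M is the number of minimal points. -/
open MeasureTheory Real

noncomputable section

/-- `u` dominates `v` if both coordinates of `u` are strictly larger. -/
def Dominates (u v : ℝ × ℝ) : Prop := v.1 < u.1 ∧ v.2 < u.2

/-- The point `X i` is maximal: no point of the sequence dominates it. -/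
def IsMaximal {m : ℕ} (X : Fin m → ℝ × ℝ) (i : Fin m) : Prop :=
  ∀ j : Fin m, ¬ Dominates (X j) (X i)

/-- The point `X i` is minimal: it dominates no point of the sequence. -/
def IsMinimal {m : ℕ} (X : Fin m → ℝ × ℝ) (i : Fin m) : Prop :=
  ∀ j : Fin m, ¬ Dominates (X i) (X j)

/-- The number of maximal points among `X 0, …, X (m-1)`. -/
def numMaximal {m : ℕ} (X : Fin m → ℝ × ℝ) : ℕ :=
  Nat.card {i : Fin m // IsMaximal X i}

/-- The number of minimal points among `X 0, …, X (m-1)`. -/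
def numMinimal {m : ℕ} (X : Fin m → ℝ × ℝ) : ℕ :=
  Nat.card {i : Fin m // IsMinimal X i}

/-- The uniform distribution on the axis-parallel rectangle `[a,b] × [c,d]`. -/
def unifRect (a b c d : ℝ) : Measure (ℝ × ℝ) :=
  (volume (Set.Icc a b ×ˢ Set.Icc c d))⁻¹ • volume.restrict (Set.Icc a b ×ˢ Set.Icc c d)

/-- `m` points drawn independently and uniformly from the rectangle `[a,b] × [c,d]`. -/
def Pm (m : ℕ) (a b c d : ℝ) : Measure (Fin m → ℝ × ℝ) :=
  Measure.pi fun _ => unifRect a b c d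

/-!
Linearity of expectation gives `E[M] = ∑ᵢ P(Xᵢ is maximal)`. Conditionally on `Xᵢ = x`, the point
is maximal iff none of the other `m - 1` points falls in the open quadrant above and to the right
of `x`, which has probability `u v`, where `u, v ∈ [0, 1]` are the normalised distances from `x` to
the right and upper sides. Hence `P(Xᵢ is maximal) = ∫∫ (1 - u v)^(m-1) du dv = H_m / m`, so
`E[M] = H_m`, and `log m ≤ H_m ≤ 1 + log m`. The point reflection through the centre of the
rectangle preserves the uniform distribution and exchanges maximal and minimal points.
-/

theorem measurableSet_dominates {α : Type*} [MeasurableSpace α] {f g : α → ℝ × ℝ}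
    (hf : Measurable f) (hg : Measurable g) : MeasurableSet {x | Dominates (f x) (g x)} :=
  (measurableSet_lt hg.fst hf.fst).inter (measurableSet_lt hg.snd hf.snd)

theorem measurableSet_isMaximal {m : ℕ} (i : Fin m) :
    MeasurableSet {X : Fin m → ℝ × ℝ | IsMaximal X i} := by
  simp only [IsMaximal, Set.ofPred_forall]
  exact .iInter fun j =>
    (measurableSet_dominates (measurable_pi_apply j) (measurable_pi_apply i)).compl

theorem dominates_sub_sub_iff (p u v : ℝ × ℝ) : Dominates (p - u) (p - v) ↔ Dominates v u := by
  simp [Dominates]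

theorem setOf_isMinimal_eq_preimage {m : ℕ} (p : ℝ × ℝ) (i : Fin m) :
    {X | IsMinimal X i} = (fun X j => p - X j) ⁻¹' {X : Fin m → ℝ × ℝ | IsMaximal X i} := by
  ext X
  simp only [Set.mem_ofPred_eq, Set.mem_preimage, IsMinimal, IsMaximal, dominates_sub_sub_iff]

theorem integral_natCard_eq_sum_measureReal {Ω ι : Type*} [MeasurableSpace Ω] [Fintype ι]
    (P : Measure Ω) [IsFiniteMeasure P] (p : Ω → ι → Prop)
    (hp : ∀ i, MeasurableSet {ω | p ω i}) :
    ∫ ω, (Nat.card {i // p ω i} : ℝ) ∂P = ∑ i, P.real {ω | p ω i} := by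
  classical
  have hcard (ω : Ω) : (Nat.card {i // p ω i} : ℝ) = ∑ i, {ω | p ω i}.indicator 1 ω := by
    rw [Nat.card_eq_fintype_card, Fintype.card_subtype, Finset.card_filter]
    push_cast
    simp [Set.indicator_apply]
  simp_rw [hcard]
  rw [integral_finsetSum _ fun i _ => (integrable_const 1).indicator (hp i)]
  simp_rw [integral_indicator_one (hp _)]

theorem measureReal_pi_isMaximal (μ : Measure (ℝ × ℝ)) [IsFiniteMeasure μ] {n : ℕ}
    (i : Fin (n + 1)) :
    (Measure.pi fun _ => μ).real {X | IsMaximal X i}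
      = ∫ x, μ.real {y | ¬ Dominates y x} ^ n ∂μ := by
  set S : Set ((ℝ × ℝ) × (Fin n → ℝ × ℝ)) := {p | ∀ j, ¬ Dominates (p.2 j) p.1}
  have hS : MeasurableSet S := by
    simp only [S, Set.ofPred_forall]
    exact .iInter fun j => (measurableSet_dominates
      ((measurable_pi_apply j).comp measurable_snd) measurable_fst).compl
  have hpre : {X | IsMaximal X i} = MeasurableEquiv.piFinSuccAbove (fun _ => ℝ × ℝ) i ⁻¹' S := by
    ext X
    simp [S, IsMaximal, Fin.forall_iff_succAbove i, Dominates,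
      MeasurableEquiv.piFinSuccAbove_apply, Fin.removeNth]
  have hslice (x : ℝ × ℝ) : Prod.mk x ⁻¹' S = Set.univ.pi fun _ => {y | ¬ Dominates y x} := by
    ext Y; simp [S]
  have hmeas : Measurable fun x => μ {y | ¬ Dominates y x} :=
    measurable_measure_prodMk_left (measurableSet_dominates measurable_snd measurable_fst).compl
  rw [measureReal_def, hpre, (measurePreserving_piFinSuccAbove (fun _ => μ) i).measure_preimage
    hS.nullMeasurableSet, Measure.prod_apply hS]
  simp_rw [hslice, Measure.pi_pi, Finset.prod_const, Finset.card_univ, Fintype.card_fin]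
  rw [← integral_toReal (hmeas.pow_const n).aemeasurable
    (ae_of_all _ fun x => ENNReal.pow_lt_top (measure_lt_top _ _))]
  simp [measureReal_def]

theorem intervalIntegral_comp_sub_div_sub {c d : ℝ} (h : c ≠ d) (f : ℝ → ℝ) :
    ∫ y in c..d, f ((d - y) / (d - c)) = (d - c) * ∫ t in (0 : ℝ)..1, f t := by
  have hdc : d - c ≠ 0 := sub_ne_zero.2 h.symm
  simp_rw [sub_div]
  rw [intervalIntegral.integral_comp_sub_div f hdc, sub_self, ← sub_div, div_self hdc, smul_eq_mul]

theorem integral_one_sub_mul_pow (n : ℕ) (s : ℝ) :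
    ∫ t in (0 : ℝ)..1, (1 - s * t) ^ n = (∑ k ∈ Finset.range (n + 1), (1 - s) ^ k) / (n + 1) := by
  rcases eq_or_ne s 0 with rfl | hs
  · simp only [zero_mul, sub_zero, one_pow, intervalIntegral.integral_const, smul_eq_mul,
      mul_one, Finset.sum_const, Finset.card_range, nsmul_eq_mul, Nat.cast_add, Nat.cast_one]
    field_simp
  · rw [intervalIntegral.integral_comp_sub_mul (fun u => u ^ n) hs, integral_pow, smul_eq_mul]
    have := geom_sum_mul_neg (1 - s) (n + 1)
    simp only [mul_one, mul_zero, sub_zero, one_pow]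
    field_simp
    linear_combination -this

theorem integral_one_sub_pow (k : ℕ) : ∫ s in (0 : ℝ)..1, (1 - s) ^ k = 1 / (k + 1) := by
  simp [intervalIntegral.integral_comp_sub_left (fun u => u ^ k), integral_pow]

theorem integral_integral_one_sub_mul_pow (n : ℕ) :
    ∫ s in (0 : ℝ)..1, ∫ t in (0 : ℝ)..1, (1 - s * t) ^ n = harmonic (n + 1) / (n + 1) := by
  simp_rw [integral_one_sub_mul_pow, intervalIntegral.integral_div]
  rw [intervalIntegral.integral_finsetSum fun k _ =>
    (by fun_prop : Continuous fun s : ℝ => (1 - s) ^ k).intervalIntegrable 0 1]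
  simp_rw [integral_one_sub_pow]
  push_cast [harmonic]
  simp [one_div]

section Rectangle

variable {a b c d : ℝ}

theorem setIntegral_Icc_prod_Icc_comp_normalize (hab : a < b) (hcd : c < d) {f : ℝ → ℝ → ℝ}
    (hf : Continuous (Function.uncurry f)) :
    ∫ x in Set.Icc a b ×ˢ Set.Icc c d, f ((b - x.1) / (b - a)) ((d - x.2) / (d - c))
      = (b - a) * (d - c) * ∫ s in (0 : ℝ)..1, ∫ t in (0 : ℝ)..1, f s t := by
  have hint : IntegrableOn (fun x : ℝ × ℝ => f ((b - x.1) / (b - a)) ((d - x.2) / (d - c)))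
      (Set.Icc a b ×ˢ Set.Icc c d) :=
    (hf.comp₂ (by fun_prop) (by fun_prop)).continuousOn.integrableOn_compact
      (isCompact_Icc.prod isCompact_Icc)
  rw [Measure.volume_eq_prod, setIntegral_prod _ hint]
  simp only [integral_Icc_eq_integral_Ioc, ← intervalIntegral.integral_of_le hab.le,
    ← intervalIntegral.integral_of_le hcd.le, intervalIntegral_comp_sub_div_sub hcd.ne]
  rw [intervalIntegral.integral_const_mul,
    intervalIntegral_comp_sub_div_sub hab.ne fun s => ∫ t in (0 : ℝ)..1, f s t]
  ring

theorem volume_real_Icc_prod_Icc (hab : a ≤ b) (hcd : c ≤ d) :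
    volume.real (Set.Icc a b ×ˢ Set.Icc c d) = (b - a) * (d - c) := by
  rw [Measure.volume_eq_prod, measureReal_prod_prod, Real.volume_real_Icc_of_le hab,
    Real.volume_real_Icc_of_le hcd]

theorem isProbabilityMeasure_unifRect (hab : a < b) (hcd : c < d) :
    IsProbabilityMeasure (unifRect a b c d) := by
  have hpos : volume (Set.Icc a b ×ˢ Set.Icc c d) ≠ 0 := by
    rw [Measure.volume_eq_prod, Measure.prod_prod, Real.volume_Icc, Real.volume_Icc]
    simp [hab, hcd]
  constructor
  rw [unifRect, Measure.smul_apply, Measure.restrict_apply_univ, smul_eq_mul,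
    ENNReal.inv_mul_cancel hpos (isCompact_Icc.prod isCompact_Icc).measure_lt_top.ne]

theorem unifRect_real_apply {s : Set (ℝ × ℝ)} (hs : MeasurableSet s) :
    (unifRect a b c d).real s
      = volume.real (s ∩ Set.Icc a b ×ˢ Set.Icc c d)
        / volume.real (Set.Icc a b ×ˢ Set.Icc c d) := by
  rw [unifRect, measureReal_def, Measure.smul_apply, Measure.restrict_apply hs, smul_eq_mul,
    ENNReal.toReal_mul, ENNReal.toReal_inv, div_eq_inv_mul, measureReal_def, measureReal_def]

theorem integral_unifRect (f : ℝ × ℝ → ℝ) :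
    ∫ x, f x ∂unifRect a b c d
      = (∫ x in Set.Icc a b ×ˢ Set.Icc c d, f x) / volume.real (Set.Icc a b ×ˢ Set.Icc c d) := by
  rw [unifRect, integral_smul_measure, ENNReal.toReal_inv, smul_eq_mul, inv_mul_eq_div,
    measureReal_def]

theorem unifRect_real_setOf_not_dominates (hab : a < b) (hcd : c < d) {x : ℝ × ℝ}
    (hx : x ∈ Set.Icc a b ×ˢ Set.Icc c d) :
    (unifRect a b c d).real {y | ¬ Dominates y x}
      = 1 - (b - x.1) / (b - a) * ((d - x.2) / (d - c)) := by
  have := isProbabilityMeasure_unifRect hab hcd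
  obtain ⟨⟨hax, hxb⟩, hcx, hxd⟩ := hx
  have hquadrant : {y | Dominates y x} = Set.Ioi x.1 ×ˢ Set.Ioi x.2 := by
    ext y; simp [Dominates]
  have hcut : Set.Ioi x.1 ×ˢ Set.Ioi x.2 ∩ Set.Icc a b ×ˢ Set.Icc c d
      = Set.Ioc x.1 b ×ˢ Set.Ioc x.2 d := by
    rw [Set.prod_inter_prod]
    congr 1 <;> ext z <;> simp only [Set.mem_inter_iff, Set.mem_Ioi, Set.mem_Icc, Set.mem_Ioc] <;>
      exact ⟨fun h => ⟨h.1, h.2.2⟩, fun h => ⟨h.1, by linarith [h.1], h.2⟩⟩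
  rw [← Set.compl_ofPred, probReal_compl_eq_one_sub, hquadrant,
    unifRect_real_apply (measurableSet_Ioi.prod measurableSet_Ioi), hcut,
    volume_real_Icc_prod_Icc hab.le hcd.le, Measure.volume_eq_prod, measureReal_prod_prod,
    Real.volume_real_Ioc_of_le hxb, Real.volume_real_Ioc_of_le hxd]
  · field_simp
  · exact measurableSet_dominates measurable_id measurable_const

theorem ae_unifRect_mem_Icc_prod_Icc : ∀ᵐ x ∂unifRect a b c d, x ∈ Set.Icc a b ×ˢ Set.Icc c d :=
  Measure.ae_smul_measure (ae_restrict_mem (measurableSet_Icc.prod measurableSet_Icc)) _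

theorem isProbabilityMeasure_pm (hab : a < b) (hcd : c < d) (m : ℕ) :
    IsProbabilityMeasure (Pm m a b c d) := by
  have := isProbabilityMeasure_unifRect hab hcd
  unfold Pm
  infer_instance

theorem measureReal_pm_isMaximal (hab : a < b) (hcd : c < d) {n : ℕ} (i : Fin (n + 1)) :
    (Pm (n + 1) a b c d).real {X | IsMaximal X i} = harmonic (n + 1) / (n + 1) := by
  have := isProbabilityMeasure_unifRect hab hcd
  have hcongr : ∀ᵐ x ∂unifRect a b c d, (unifRect a b c d).real {y | ¬ Dominates y x} ^ n
      = (1 - (b - x.1) / (b - a) * ((d - x.2) / (d - c))) ^ n :=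
    ae_unifRect_mem_Icc_prod_Icc.mono fun x hx => by
      rw [unifRect_real_setOf_not_dominates hab hcd hx]
  rw [Pm, measureReal_pi_isMaximal, integral_congr_ae hcongr, integral_unifRect,
    setIntegral_Icc_prod_Icc_comp_normalize hab hcd (f := fun s t => (1 - s * t) ^ n)
      (by fun_prop),
    integral_integral_one_sub_mul_pow, volume_real_Icc_prod_Icc hab.le hcd.le]
  exact mul_div_cancel_left₀ _ (mul_ne_zero (sub_ne_zero.2 hab.ne') (sub_ne_zero.2 hcd.ne'))

theorem measurePreserving_sub_left_unifRect :
    MeasurePreserving (fun x => (a + b, c + d) - x) (unifRect a b c d) (unifRect a b c d) := by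
  have hrect : (fun x => (a + b, c + d) - x) ⁻¹' (Set.Icc a b ×ˢ Set.Icc c d)
      = Set.Icc a b ×ˢ Set.Icc c d := by
    ext x
    simp only [Set.mem_preimage, Set.mem_prod, Set.mem_Icc, Prod.fst_sub, Prod.snd_sub]
    constructor <;> intro h <;> refine ⟨⟨?_, ?_⟩, ?_, ?_⟩ <;> linarith [h.1.1, h.1.2, h.2.1, h.2.2]
  have := (Measure.measurePreserving_sub_left volume ((a + b, c + d) : ℝ × ℝ)).restrict_preimage
    ((measurableSet_Icc (a := a) (b := b)).prod (measurableSet_Icc (a := c) (b := d)))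
  rw [hrect] at this
  exact this.smul_measure _

theorem measurePreserving_pm_reflect (hab : a < b) (hcd : c < d) (m : ℕ) :
    MeasurePreserving (fun X j => (a + b, c + d) - X j) (Pm m a b c d) (Pm m a b c d) := by
  have := isProbabilityMeasure_unifRect hab hcd
  exact measurePreserving_pi _ _ fun _ => measurePreserving_sub_left_unifRect

theorem integral_numMaximal_pm_eq_harmonic (hab : a < b) (hcd : c < d) (m : ℕ) :
    ∫ X, (numMaximal X : ℝ) ∂Pm m a b c d = harmonic m := by
  have := isProbabilityMeasure_pm hab hcd m
  simp only [numMaximal]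
  rw [integral_natCard_eq_sum_measureReal _ _ measurableSet_isMaximal]
  cases m with
  | zero => simp
  | succ n =>
    simp_rw [measureReal_pm_isMaximal hab hcd]
    rw [Finset.sum_const, Finset.card_univ, Fintype.card_fin, nsmul_eq_mul]
    push_cast
    field_simp

theorem integral_numMinimal_pm_eq_harmonic (hab : a < b) (hcd : c < d) (m : ℕ) :
    ∫ X, (numMinimal X : ℝ) ∂Pm m a b c d = harmonic m := by
  have := isProbabilityMeasure_pm hab hcd m
  have hreflect := measurePreserving_pm_reflect hab hcd m
  have hmin (i : Fin m) : MeasurableSet {X | IsMinimal X i} := by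
    rw [setOf_isMinimal_eq_preimage (a + b, c + d)]
    exact hreflect.measurable (measurableSet_isMaximal i)
  simp only [numMinimal]
  rw [integral_natCard_eq_sum_measureReal _ _ hmin]
  simp_rw [setOf_isMinimal_eq_preimage (a + b, c + d),
    hreflect.measureReal_preimage (measurableSet_isMaximal _).nullMeasurableSet,
    ← integral_natCard_eq_sum_measureReal _ _ measurableSet_isMaximal]
  exact integral_numMaximal_pm_eq_harmonic hab hcd m

end Rectangle

theorem expected_maxima_bounds_general (a b c d : ℝ) (hab : a < b) (hcd : c < d)
    (m : ℕ) :
    (Real.log m ≤ ∫ X, (numMaximal X : ℝ) ∂(Pm m a b c d) ∧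
      ∫ X, (numMaximal X : ℝ) ∂(Pm m a b c d) ≤ Real.log m + 1) ∧
    (Real.log m ≤ ∫ X, (numMinimal X : ℝ) ∂(Pm m a b c d) ∧
      ∫ X, (numMinimal X : ℝ) ∂(Pm m a b c d) ≤ Real.log m + 1) := by
  have hlower : Real.log m ≤ harmonic m := by
    simpa using log_le_harmonic_floor m m.cast_nonneg
  have hupper : (harmonic m : ℝ) ≤ Real.log m + 1 := by
    linarith [harmonic_le_one_add_log m]
  rw [integral_numMaximal_pm_eq_harmonic hab hcd, integral_numMinimal_pm_eq_harmonic hab hcd]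
  exact ⟨⟨hlower, hupper⟩, hlower, hupper⟩

/-- For `m` points drawn independently and uniformly from a rectangle
of positive area, the expected number `E[M]` of maximal points satisfies
`log m ≤ E[M] ≤ log m + 1`; the same bounds hold for the number of minimal points. -/
theorem expected_maxima_bounds (a b c d : ℝ) (hab : a < b) (hcd : c < d)
    (m : ℕ) (hm : 1 ≤ m) :
    (Real.log m ≤ ∫ X, (numMaximal X : ℝ) ∂(Pm m a b c d) ∧
      ∫ X, (numMaximal X : ℝ) ∂(Pm m a b c d) ≤ Real.log m + 1) ∧
    (Real.log m ≤ ∫ X, (numMinimal X : ℝ) ∂(Pm m a b c d) ∧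
      ∫ X, (numMinimal X : ℝ) ∂(Pm m a b c d) ≤ Real.log m + 1) :=
  expected_maxima_bounds_general a b c d hab hcd m
end
end

section
/- Let B be a binomial random variable with parameters m (number of trials) and p ∈ [0,1] (success probability), and let l be a positive integer with mp < l. Then Pr{ B ≥ l } ≤ (mpe/l)^l / (1 − mp/l). -/
/-!
A union bound over the `l`-element sets of trials: `B ≥ l` forces all trials of some such set to
succeed, which by independence has probability `p ^ l`, so `Pr{B ≥ l} ≤ (m choose l) p ^ l`.
Then `(m choose l) ≤ m ^ l / l!` and `l! ≥ (l / e) ^ l` (from `l ^ l / l! ≤ e ^ l`) give the bound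
`(mpe/l) ^ l`; the factor `1 / (1 - mp/l) ≥ 1` is slack.
-/

open MeasureTheory ProbabilityTheory Real Finset

noncomputable section

theorem Nat.choose_mul_pow_le (n k : ℕ) {x : ℝ} (hx : 0 ≤ x) :
    (n.choose k : ℝ) * x ^ k ≤ (n * x * exp 1 / k) ^ k := by
  have hk_pow_pos : (0 : ℝ) < (k : ℝ) ^ k := by exact_mod_cast Nat.pow_self_pos
  have hfact : (k : ℝ) ^ k / exp 1 ^ k ≤ k.factorial := by
    rw [div_le_iff₀ (by positivity), exp_one_pow, ← div_le_iff₀' (by positivity)]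
    exact pow_div_factorial_le_exp _ (Nat.cast_nonneg k) k
  calc (n.choose k : ℝ) * x ^ k ≤ (n : ℝ) ^ k / k.factorial * x ^ k := by
        gcongr; exact Nat.choose_le_pow_div k n
    _ = (n * x) ^ k / k.factorial := by rw [mul_pow]; ring
    _ ≤ (n * x) ^ k / ((k : ℝ) ^ k / exp 1 ^ k) := by gcongr
    _ = (n * x * exp 1 / k) ^ k := by rw [div_div_eq_mul_div, ← mul_pow, ← div_pow]

theorem Finset.exists_card_eq_of_le_sum_of_zero_or_one {ι : Type*} [Fintype ι] {y : ι → ℝ}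
    (hy : ∀ i, y i = 0 ∨ y i = 1) {l : ℕ} (hl : (l : ℝ) ≤ ∑ i, y i) :
    ∃ s : Finset ι, #s = l ∧ ∀ i ∈ s, y i = 1 := by
  classical
  have hsum : ∑ i, y i = #{i | y i = 1} := by
    rw [natCast_card_filter]
    exact sum_congr rfl fun i _ => by rcases hy i with h | h <;> simp [h]
  obtain ⟨s, hs, hcard⟩ := exists_subset_card_eq (s := ({i | y i = 1} : Finset ι)) (n := l)
    (by exact_mod_cast hl.trans_eq hsum)
  exact ⟨s, hcard, fun i hi => (mem_filter.mp (hs hi)).2⟩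

theorem measure_le_sum_le_choose_mul_pow {ι Ω : Type*} [Fintype ι] [MeasurableSpace Ω]
    (μ : Measure Ω) (Y : ι → Ω → ℝ) (h01 : ∀ i ω, Y i ω = 0 ∨ Y i ω = 1)
    (hindep : iIndepFun Y μ) {q : ENNReal} (hq : ∀ i, μ {ω | Y i ω = 1} = q) (l : ℕ) :
    μ {ω | (l : ℝ) ≤ ∑ i, Y i ω} ≤ (Fintype.card ι).choose l * q ^ l := by
  have hsub : {ω | (l : ℝ) ≤ ∑ i, Y i ω} ⊆
      ⋃ s ∈ powersetCard l (univ : Finset ι), ⋂ i ∈ s, {ω | Y i ω = 1} := by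
    intro ω hω
    obtain ⟨s, hcard, hs⟩ := exists_card_eq_of_le_sum_of_zero_or_one (h01 · ω) hω
    exact Set.mem_biUnion (mem_powersetCard.mpr ⟨subset_univ s, hcard⟩) (Set.mem_biInter hs)
  have hinter (s : Finset ι) : μ (⋂ i ∈ s, {ω | Y i ω = 1}) = q ^ #s := by
    rw [hindep.meas_biInter (s := fun i => {ω | Y i ω = 1})
      fun i _ => ⟨{1}, measurableSet_singleton 1, rfl⟩]
    simp [hq]
  calc μ {ω | (l : ℝ) ≤ ∑ i, Y i ω}
      ≤ ∑ s ∈ powersetCard l (univ : Finset ι), μ (⋂ i ∈ s, {ω | Y i ω = 1}) :=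
        (measure_mono hsub).trans (measure_biUnion_finset_le _ _)
    _ = (Fintype.card ι).choose l * q ^ l := by
        rw [sum_congr rfl fun s hs => by rw [hinter, (mem_powersetCard.mp hs).2], sum_const,
          card_powersetCard, card_univ, nsmul_eq_mul]

theorem binomial_tail_bound_general {Ω : Type*} [MeasurableSpace Ω] (P : Measure Ω)
    [IsProbabilityMeasure P] (m : ℕ) (p : ℝ) (hp0 : 0 ≤ p)
    (Y : Fin m → Ω → ℝ)
    (h01 : ∀ i ω, Y i ω = 0 ∨ Y i ω = 1)
    (hbern : ∀ i, P {ω | Y i ω = 1} = ENNReal.ofReal p)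
    (hindep : iIndepFun Y P)
    (l : ℕ) (hlt : m * p < l) :
    (P {ω | (l : ℝ) ≤ ∑ i, Y i ω}).toReal ≤
      (m * p * Real.exp 1 / l) ^ l / (1 - m * p / l) := by
  have hl : (0 : ℝ) < l := lt_of_le_of_lt (by positivity) hlt
  have hratio : 0 ≤ m * p / l ∧ m * p / l < 1 := ⟨by positivity, (div_lt_one hl).mpr hlt⟩
  have hunion := measure_le_sum_le_choose_mul_pow P Y h01 hindep hbern l
  rw [Fintype.card_fin] at hunion
  calc (P {ω | (l : ℝ) ≤ ∑ i, Y i ω}).toReal ≤ (m.choose l : ℝ) * p ^ l := by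
        simpa [hp0] using ENNReal.toReal_mono (by finiteness) hunion
    _ ≤ (m * p * exp 1 / l) ^ l := Nat.choose_mul_pow_le m l hp0
    _ ≤ (m * p * exp 1 / l) ^ l / (1 - m * p / l) :=
        le_div_self (by positivity) (by linarith) (by linarith)

/-- Let `B = Σ_i Y i` be a binomial random variable with parameters
`m` and `p ∈ [0,1]`, i.e. the sum of `m` independent Bernoulli(`p`) random variables,
and let `l` be a positive integer with `mp < l`.  Then
`Pr{ B ≥ l } ≤ (mpe/l)^l / (1 − mp/l)`. -/
theorem binomial_tail_bound {Ω : Type*} [MeasurableSpace Ω] (P : Measure Ω)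
    [IsProbabilityMeasure P] (m : ℕ) (p : ℝ) (hp0 : 0 ≤ p) (hp1 : p ≤ 1)
    (Y : Fin m → Ω → ℝ)
    (hmeas : ∀ i, Measurable (Y i))
    (h01 : ∀ i ω, Y i ω = 0 ∨ Y i ω = 1)
    (hbern : ∀ i, P {ω | Y i ω = 1} = ENNReal.ofReal p)
    (hindep : iIndepFun Y P)
    (l : ℕ) (hl : 0 < l) (hlt : m * p < l) :
    (P {ω | (l : ℝ) ≤ ∑ i, Y i ω}).toReal ≤
      (m * p * Real.exp 1 / l) ^ l / (1 - m * p / l) :=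
  binomial_tail_bound_general P m p hp0 Y h01 hbern hindep l hlt
end
end
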